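/- No relative equilibria below the excited energy with large angular momentum (equal-mass three-body): let α > 2, ω > 0, m₁ = m₂ = m₃ = 1, and set E*(ω) = 2(α/2 − 1)(1 + 2^{−(α+1)})^{2/(α+2)} (α/ω²)^{−α/(α+2)} and A*(ω) = 2[α(1 + 2^{−(α+1)})]^{2/(α+2)} ω^{(α−2)/(α+2)} (the energy and angular momentum magnitude of the collinear relative equilibrium with frequency ω). Then the set K(ω) = {(x,ẋ) : E(x,ẋ) < E*(ω) and |A(x,ẋ)| ≥ A*(ω)} contains no relative equilibrium: for every frequency ω₁ > 0, neither the collinear nor the equilateral relative equilibrium with frequency ω₁ lies in K(ω). -/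

import Mathlib

/- STATEMENT 19: no relative equilibria below the excited energy with large angular momentum
(equal-mass three-body problem, α > 2): with E*(ω), A*(ω) the energy and angular momentum of
the collinear relative equilibrium of frequency ω, no collinear nor equilateral relative
equilibrium of any frequency ω₁ > 0 satisfies both E < E*(ω) and |A| ≥ A*(ω). -/

namespace NBodyPaper

open Real

/-- Energy of the collinear (Euler) relative equilibrium of frequency `w`
for masses `m₁ = m₂ = m₃ = 1`. -/
noncomputable def Elinear (α w : ℝ) : ℝ :=
  2 * (α / 2 - 1) * (1 + 2 ^ (-(α + 1))) ^ (2 / (α + 2)) * (α / w ^ 2) ^ (-(α / (α + 2)))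

/-- Angular momentum magnitude of the collinear (Euler) relative equilibrium of
frequency `w`. -/
noncomputable def Alinear (α w : ℝ) : ℝ :=
  2 * (α * (1 + 2 ^ (-(α + 1)))) ^ (2 / (α + 2)) * w ^ ((α - 2) / (α + 2))

/-- Energy of the equilateral (Lagrange) relative equilibrium of frequency `w`. -/
noncomputable def Etriangle (α w : ℝ) : ℝ :=
  2 * (α / 2 - 1) * ((3 : ℝ) / 2) ^ (2 / (α + 2)) * (α / w ^ 2) ^ (-(α / (α + 2)))

/-- Angular momentum magnitude of the equilateral (Lagrange) relative equilibrium of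
frequency `w`. -/
noncomputable def Atriangle (α w : ℝ) : ℝ :=
  (α * ((3 : ℝ) / 2)) ^ (2 / (α + 2)) * w ^ ((α - 2) / (α + 2))

/-! Along each family of relative equilibria both the energy and the angular momentum increase
with the frequency, and at equal frequency the collinear configuration has the lower energy and
the larger angular momentum. So `|A| ≥ A*(ω)` forces the frequency `ω₁` to be at least `ω`, and
then `E ≥ E(ω) ≥ E*(ω)`. -/

open Set

lemma rpow_div_sq_neg_le_of_le {c s w₁ w₂ : ℝ} (hc : 0 < c) (hs : 0 ≤ s) (hw₁ : 0 < w₁)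
    (hw : w₁ ≤ w₂) : (c / w₁ ^ 2) ^ (-s) ≤ (c / w₂ ^ 2) ^ (-s) :=
  rpow_le_rpow_of_nonpos (div_pos hc (pow_pos (hw₁.trans_le hw) 2)) (by gcongr) (neg_nonpos.2 hs)

lemma Elinear_monotoneOn {α : ℝ} (hα : 2 ≤ α) : MonotoneOn (Elinear α) (Ioi 0) := by
  intro w₁ hw₁ w₂ _ hw
  have hα' : 0 ≤ α / 2 - 1 := by linarith
  exact mul_le_mul_of_nonneg_left
    (rpow_div_sq_neg_le_of_le (by linarith) (by positivity) hw₁ hw) (by positivity)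

lemma Etriangle_monotoneOn {α : ℝ} (hα : 2 ≤ α) : MonotoneOn (Etriangle α) (Ioi 0) := by
  intro w₁ hw₁ w₂ _ hw
  have hα' : 0 ≤ α / 2 - 1 := by linarith
  exact mul_le_mul_of_nonneg_left
    (rpow_div_sq_neg_le_of_le (by linarith) (by positivity) hw₁ hw) (by positivity)

lemma Alinear_strictMonoOn {α : ℝ} (hα : 2 < α) : StrictMonoOn (Alinear α) (Ioi 0) := by
  intro w₁ hw₁ w₂ _ hw
  have hα' : 0 < α := by linarith
  exact mul_lt_mul_of_pos_left
    (rpow_lt_rpow hw₁.le hw (div_pos (by linarith) (by linarith))) (by positivity)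

lemma Atriangle_strictMonoOn {α : ℝ} (hα : 2 < α) : StrictMonoOn (Atriangle α) (Ioi 0) := by
  intro w₁ hw₁ w₂ _ hw
  have hα' : 0 < α := by linarith
  exact mul_lt_mul_of_pos_left
    (rpow_lt_rpow hw₁.le hw (div_pos (by linarith) (by linarith))) (by positivity)

lemma one_add_two_rpow_neg_le {α : ℝ} (hα : 0 ≤ α) : 1 + (2 : ℝ) ^ (-(α + 1)) ≤ 3 / 2 := by
  have : (2 : ℝ) ^ (-(α + 1)) ≤ 2 ^ (-1 : ℝ) :=
    rpow_le_rpow_of_exponent_le one_le_two (by linarith)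
  norm_num at this ⊢
  linarith

lemma Elinear_le_Etriangle {α : ℝ} (hα : 2 ≤ α) (w : ℝ) : Elinear α w ≤ Etriangle α w := by
  have hα' : 0 ≤ α / 2 - 1 := by linarith
  have hbase : 0 ≤ α / w ^ 2 := by positivity
  unfold Elinear Etriangle
  gcongr
  exact one_add_two_rpow_neg_le (by linarith)

lemma Atriangle_le_Alinear {α w : ℝ} (hα : 0 ≤ α) (hw : 0 ≤ w) :
    Atriangle α w ≤ Alinear α w := by
  have hβ : 0 ≤ 2 / (α + 2) := by positivity
  have h32 : ((3 : ℝ) / 2) ^ (2 / (α + 2)) ≤ 2 :=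
    (rpow_le_self_of_one_le (by norm_num) ((div_le_one (by linarith)).2 (by linarith))).trans
      (by norm_num)
  have hc : 1 ≤ (1 + (2 : ℝ) ^ (-(α + 1))) ^ (2 / (α + 2)) :=
    one_le_rpow (le_add_of_nonneg_right (by positivity)) hβ
  unfold Atriangle Alinear
  rw [mul_rpow hα (by norm_num), mul_rpow hα (by positivity)]
  refine mul_le_mul_of_nonneg_right ?_ (rpow_nonneg hw _)
  calc α ^ (2 / (α + 2)) * ((3 : ℝ) / 2) ^ (2 / (α + 2))
      ≤ α ^ (2 / (α + 2)) * 2 := by gcongr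
    _ ≤ 2 * (α ^ (2 / (α + 2)) * (1 + 2 ^ (-(α + 1))) ^ (2 / (α + 2))) := by
      nlinarith [rpow_nonneg hα (2 / (α + 2))]

theorem not_lt_and_le_of_monotoneOn_of_strictMonoOn {α β γ : Type*} [LinearOrder α]
    [Preorder β] [Preorder γ] {f : α → β} {g : α → γ} {s : Set α}
    (hf : MonotoneOn f s) (hg : StrictMonoOn g s) {x y : α} (hx : x ∈ s) (hy : y ∈ s) :
    ¬(f y < f x ∧ g x ≤ g y) := fun ⟨hfyx, hgxy⟩ ↦
  (hf hx hy ((hg.le_iff_le hx hy).1 hgxy)).not_gt hfyx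

/-- **No relative equilibrium lies in `K(ω) = {E < E*(ω), |A| ≥ A*(ω)}`** for the
equal-mass three-body problem with `α > 2`, where `E*(ω) = Elinear α ω` and
`A*(ω) = Alinear α ω`: for every frequency `ω₁ > 0`, neither the collinear nor the
equilateral relative equilibrium with frequency `ω₁` satisfies both constraints. -/
theorem no_relative_equilibrium_in_K (α ω : ℝ) (hα : 2 < α) (hω : 0 < ω) :
    ∀ ω₁ : ℝ, 0 < ω₁ →
      ¬(Elinear α ω₁ < Elinear α ω ∧ Alinear α ω ≤ Alinear α ω₁) ∧
      ¬(Etriangle α ω₁ < Elinear α ω ∧ Alinear α ω ≤ Atriangle α ω₁) := by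
  intro ω₁ hω₁
  have not_in_K : ∀ {E A : ℝ → ℝ}, MonotoneOn E (Ioi 0) → StrictMonoOn A (Ioi 0) →
      Elinear α ω ≤ E ω → A ω ≤ Alinear α ω → ¬(E ω₁ < Elinear α ω ∧ Alinear α ω ≤ A ω₁) :=
    fun hE hA hEω hAω ⟨hE₁, hA₁⟩ ↦ not_lt_and_le_of_monotoneOn_of_strictMonoOn hE hA
      (mem_Ioi.2 hω) (mem_Ioi.2 hω₁) ⟨hE₁.trans_le hEω, hAω.trans hA₁⟩
  exact ⟨not_in_K (Elinear_monotoneOn hα.le) (Alinear_strictMonoOn hα) le_rfl le_rfl,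
    not_in_K (Etriangle_monotoneOn hα.le) (Atriangle_strictMonoOn hα) (Elinear_le_Etriangle hα.le ω)
      (Atriangle_le_Alinear (by linarith) hω.le)⟩

end NBodyPaper
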